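/- arXiv:0907.0350 — 4 statements merged into one kernel-verified Lean document; each statement's English description precedes it below -/
import Mathlib

section
/- A holomorphic function ψ on the right half-plane ℍ has nonnegative real part if and only if the kernel K(z,w) = (ψ(z) + conj(ψ(w)))/(z + conj w) is a positive kernel on ℍ, i.e., for all n, all scalars c₁,…,cₙ ∈ ℂ, and all points x₁,…,xₙ ∈ ℍ, we have Σ_{i,j} c_i conj(c_j) K(x_i,x_j) ≥ 0 (the sum is real and nonnegative). -/
/-!
Only the forward implication has content (the converse is the diagonal entry of the kernel).
The Cayley transform `z ↦ (z - 1)/(z + 1)` turns the kernel, up to the factor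
`(z + 1)⁻¹ * conj (w + 1)⁻¹`, into the disk kernel `(f a + conj (f b))/(1 - a * conj b)` with
`Re f ≥ 0`. For `f` holomorphic up to the unit circle, Cauchy's formula, together with
`z/(z - b) = conj (1 - z * conj b)⁻¹` for `|z| = 1`, writes `∑ᵢⱼ cᵢ conj cⱼ f wᵢ/(1 - wᵢ conj wⱼ)`
as the circle average of `|G|² f`, where `G = ∑ⱼ conj cⱼ/(1 - z conj wⱼ)`; its real part is
nonnegative, and the Gram form of the kernel is twice that real part. General `f` is reached
through the dilations `f (r ·)`, `r → 1⁻`, since positive kernels are closed under pointwise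
limits.
-/

open Complex MeasureTheory Filter Topology Set

noncomputable section

/-- The open right half-plane. -/
def RHP : Set ℂ := {z : ℂ | 0 < z.re}

/-- The Szegő kernel of the right half-plane: `kern w z = k_w(z) = 1/(z + conj w)`. -/
def kern (w z : ℂ) : ℂ := 1 / (z + (starRingEnd ℂ) w)

/-- The mean of `|f|^2` on the vertical line `Re = x`. -/
def hardyMean2 (f : ℂ → ℂ) (x : ℝ) : ℝ :=
  (1 / (2 * Real.pi)) * ∫ y : ℝ, ‖f (x + y * Complex.I)‖ ^ 2

/-- Membership in the Hardy space `H²(ℍ)` of the right half-plane. -/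
def MemHardy2 (f : ℂ → ℂ) : Prop :=
  DifferentiableOn ℂ f RHP ∧ ∃ C : ℝ, ∀ x : ℝ, 0 < x → hardyMean2 f x ≤ C

/-- The squared `H²` norm, as the supremum of the vertical-line means. -/
def hardyNormSq (f : ℂ → ℂ) : ℝ :=
  sSup {m : ℝ | ∃ x : ℝ, 0 < x ∧ m = hardyMean2 f x}

/-- `HardyInnerTendsto f g L` says the `H²(ℍ)` inner product `⟨f, g⟩` equals `L`,
realized as a limit of inner products over vertical lines `Re = x` as `x → 0⁺`. -/
def HardyInnerTendsto (f g : ℂ → ℂ) (L : ℂ) : Prop :=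
  Tendsto (fun x : ℝ => ((1 / (2 * Real.pi) : ℝ) : ℂ) *
      ∫ y : ℝ, f (x + y * Complex.I) * (starRingEnd ℂ) (g (x + y * Complex.I)))
    (𝓝[>] (0 : ℝ)) (𝓝 L)

/-- The composition operator `C_φ : f ↦ f ∘ φ` is bounded on `H²(ℍ)` with bound `M`. -/
def CompBoundedBy (φ : ℂ → ℂ) (M : ℝ) : Prop :=
  ∀ f : ℂ → ℂ, MemHardy2 f →
    MemHardy2 (f ∘ φ) ∧ hardyNormSq (f ∘ φ) ≤ M ^ 2 * hardyNormSq f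

/-- The operator norm of the composition operator `C_φ` on `H²(ℍ)`. -/
def compNorm (φ : ℂ → ℂ) : ℝ :=
  sInf {M : ℝ | 0 ≤ M ∧ CompBoundedBy φ M}

/-- A kernel `K : X × X → ℂ` is positive if every finite Gram sum
`∑ᵢⱼ cᵢ conj(cⱼ) K(xᵢ,xⱼ)` is real and nonnegative. -/
def IsPosKernel {X : Type*} (K : X → X → ℂ) : Prop :=
  ∀ (n : ℕ) (c : Fin n → ℂ) (x : Fin n → X),
    0 ≤ (∑ i, ∑ j, c i * (starRingEnd ℂ) (c j) * K (x i) (x j)).re ∧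
    (∑ i, ∑ j, c i * (starRingEnd ℂ) (c j) * K (x i) (x j)).im = 0

open ComplexConjugate Metric Real
open scoped ComplexOrder

section PosKernel

variable {X Y : Type*}

def gram (K : X → X → ℂ) {n : ℕ} (c : Fin n → ℂ) (x : Fin n → X) : ℂ :=
  ∑ i, ∑ j, c i * conj (c j) * K (x i) (x j)

theorem isPosKernel_iff_gram_nonneg {K : X → X → ℂ} :
    IsPosKernel K ↔ ∀ (n : ℕ) (c : Fin n → ℂ) (x : Fin n → X), 0 ≤ gram K c x := by
  simp only [IsPosKernel, gram, Complex.nonneg_iff, eq_comm (a := (0 : ℝ))]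

theorem IsPosKernel.comp {K : X → X → ℂ} (hK : IsPosKernel K) (φ : Y → X) :
    IsPosKernel (fun y y' => K (φ y) (φ y')) :=
  fun n c y => hK n c (φ ∘ y)

theorem IsPosKernel.mul_conj {K : X → X → ℂ} (hK : IsPosKernel K) (h : X → ℂ) :
    IsPosKernel (fun x y => h x * conj (h y) * K x y) := by
  rw [isPosKernel_iff_gram_nonneg] at hK ⊢
  intro n c x
  convert hK n (fun i => c i * h (x i)) x using 1
  simp only [gram, map_mul]
  exact Finset.sum_congr rfl fun i _ => Finset.sum_congr rfl fun j _ => by ring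

theorem IsPosKernel.diag_nonneg {K : X → X → ℂ} (hK : IsPosKernel K) (x : X) : 0 ≤ K x x := by
  simpa [gram] using isPosKernel_iff_gram_nonneg.mp hK 1 1 fun _ => x

theorem IsPosKernel.of_tendsto {ι : Type*} {l : Filter ι} [l.NeBot] {K : ι → X → X → ℂ}
    {L : X → X → ℂ} (hK : ∀ᶠ i in l, IsPosKernel (K i))
    (hL : ∀ x y, Tendsto (fun i => K i x y) l (𝓝 (L x y))) : IsPosKernel L := by
  simp only [isPosKernel_iff_gram_nonneg] at hK ⊢
  intro n c x
  refine ge_of_tendsto ?_ (hK.mono fun i hi => hi n c x)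
  exact tendsto_finsetSum _ fun i _ => tendsto_finsetSum _ fun j _ => (hL _ _).const_mul _

theorem gram_add_conj_swap (H : X → X → ℂ) {n : ℕ} (c : Fin n → ℂ) (x : Fin n → X) :
    gram (fun x y => H x y + conj (H y x)) c x = gram H c x + conj (gram H c x) := by
  simp only [gram, map_sum, map_mul, Complex.conj_conj, mul_add, Finset.sum_add_distrib]
  rw [Finset.sum_comm (f := fun i j => conj (c i) * c j * conj (H (x i) (x j)))]
  congr 1
  exact Finset.sum_congr rfl fun i _ => Finset.sum_congr rfl fun j _ => by ring

theorem isPosKernel_add_conj_swap {H : X → X → ℂ}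
    (hH : ∀ (n : ℕ) (c : Fin n → ℂ) (x : Fin n → X), 0 ≤ (gram H c x).re) :
    IsPosKernel (fun x y => H x y + conj (H y x)) := by
  rw [isPosKernel_iff_gram_nonneg]
  intro n c x
  rw [gram_add_conj_swap, Complex.add_conj]
  exact_mod_cast mul_nonneg zero_le_two (hH n c x)

end PosKernel

theorem one_sub_mul_conj_ne_zero {z b : ℂ} (hz : ‖z‖ ≤ 1) (hb : ‖b‖ < 1) :
    1 - z * conj b ≠ 0 := by
  refine sub_ne_zero.mpr fun h => ?_
  have : ‖z * conj b‖ < 1 := by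
    rw [norm_mul, Complex.norm_conj]
    nlinarith [norm_nonneg z, norm_nonneg b]
  simp [← h] at this

theorem div_sub_eq_conj_inv_one_sub_mul_conj {z b : ℂ} (hz : ‖z‖ = 1) :
    z / (z - b) = conj (1 - z * conj b)⁻¹ := by
  have hzz : conj z * z = 1 := by
    rw [← Complex.normSq_eq_conj_mul_self, Complex.normSq_eq_norm_sq, hz]; norm_num
  rw [map_inv₀, map_sub, map_mul, Complex.conj_conj, map_one, ← hzz, ← mul_sub,
    mul_inv, inv_eq_of_mul_eq_one_right hzz, div_eq_mul_inv]

theorem re_gram_div_one_sub_mul_conj_nonneg {f : ℂ → ℂ} (hf : DiffContOnCl ℂ f (ball 0 1))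
    (hre : ∀ z ∈ sphere (0 : ℂ) 1, 0 ≤ (f z).re) {n : ℕ} (c : Fin n → ℂ)
    (w : Fin n → ball (0 : ℂ) 1) :
    0 ≤ (gram (fun a b : ball (0 : ℂ) 1 => f a / (1 - a * conj (b : ℂ))) c w).re := by
  have hw : ∀ i, ‖(w i : ℂ)‖ < 1 := fun i => mem_ball_zero_iff.mp (w i).2
  have hsphere : sphere (0 : ℂ) 1 ⊆ closure (ball 0 1) := by
    rw [closure_ball 0 one_ne_zero]; exact sphere_subset_closedBall
  set G : ℂ → ℂ := fun z => ∑ j, conj (c j) * (1 - z * conj (w j : ℂ))⁻¹ with hG_def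
  have hG : DifferentiableOn ℂ G (closedBall 0 1) := by
    refine DifferentiableOn.fun_sum fun j _ => (differentiableOn_const _).mul ?_
    refine ((differentiableOn_const _).sub (differentiableOn_id.mul_const _)).inv fun z hz => ?_
    exact one_sub_mul_conj_ne_zero (mem_closedBall_zero_iff.mp hz) (hw j)
  have hfG : DiffContOnCl ℂ (fun z => G z * f z) (ball 0 1) :=
    ((closure_ball (0 : ℂ) one_ne_zero ▸ hG).diffContOnCl).smul hf
  have hcont : ContinuousOn (fun z => G z * f z) (sphere 0 1) :=
    hfG.continuousOn.mono hsphere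
  have hcauchy : gram (fun a b : ball (0 : ℂ) 1 => f a / (1 - a * conj (b : ℂ))) c w =
      circleAverage (fun z => conj (G z) * (G z * f z)) 0 1 := by
    have hint : ∀ i ∈ Finset.univ, CircleIntegrable
        (fun z => c i • ((z - 0) / (z - w i)) • (G z * f z)) 0 1 := by
      intro i _
      refine ContinuousOn.circleIntegrable zero_le_one
        (continuousOn_const.fun_smul (.fun_smul ?_ hcont))
      refine (continuousOn_id.sub continuousOn_const).div (continuousOn_id.sub continuousOn_const)
        fun z hz => sub_ne_zero.mpr fun h => ?_
      have := hw i
      rw [← h, ← mem_sphere_zero_iff_norm.mp hz] at this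
      exact this.false
    calc _ = ∑ i, c i • (G (w i) * f (w i)) := by
          simp only [gram, hG_def, Finset.sum_mul, Finset.mul_sum, smul_eq_mul]
          exact Finset.sum_congr rfl fun i _ => Finset.sum_congr rfl fun j _ => by ring
      _ = ∑ i, circleAverage (fun z => c i • ((z - 0) / (z - w i)) • (G z * f z)) 0 1 := by
          refine Finset.sum_congr rfl fun i _ => ?_
          rw [circleAverage_fun_smul, DiffContOnCl.circleAverage_smul_div (by rwa [abs_one])
            (by simp [(w i).2])]
      _ = circleAverage (fun z => conj (G z) * (G z * f z)) 0 1 := by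
          rw [← circleAverage_fun_sum hint]
          refine circleAverage_congr_sphere fun z hz => ?_
          have hz1 : ‖z‖ = 1 := by simpa using hz
          have hconjG : conj (G z) = ∑ i, c i * (z / (z - w i)) := by
            simp only [hG_def, map_sum, map_mul, Complex.conj_conj,
              div_sub_eq_conj_inv_one_sub_mul_conj hz1]
          simp only [hconjG, smul_eq_mul, sub_zero, Finset.sum_mul, mul_assoc]
  have hint : CircleIntegrable (fun z => conj (G z) * (G z * f z)) 0 1 :=
    ContinuousOn.circleIntegrable zero_le_one <| .mul
      (Complex.continuous_conj.comp_continuousOn (hG.continuousOn.mono sphere_subset_closedBall))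
      hcont
  rw [hcauchy, ← Complex.reCLM_apply, ← ContinuousLinearMap.circleAverage_comp_comm _ hint]
  refine circleAverage_nonneg_of_nonneg fun z hz => ?_
  rw [Function.comp_apply, Complex.reCLM_apply, ← mul_assoc, ← Complex.normSq_eq_conj_mul_self,
    Complex.re_ofReal_mul]
  exact mul_nonneg (Complex.normSq_nonneg _) (hre z (by simpa using hz))

theorem isPosKernel_disk_of_diffContOnCl {f : ℂ → ℂ} (hf : DiffContOnCl ℂ f (ball 0 1))
    (hre : ∀ z ∈ sphere (0 : ℂ) 1, 0 ≤ (f z).re) :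
    IsPosKernel fun a b : ball (0 : ℂ) 1 => (f a + conj (f b)) / (1 - a * conj (b : ℂ)) := by
  convert isPosKernel_add_conj_swap fun _ => re_gram_div_one_sub_mul_conj_nonneg hf hre
    using 3 with a b
  simp only [map_div₀, map_sub, map_one, map_mul, Complex.conj_conj]
  ring

theorem isPosKernel_disk {f : ℂ → ℂ} (hf : DifferentiableOn ℂ f (ball 0 1))
    (hre : ∀ z ∈ ball (0 : ℂ) 1, 0 ≤ (f z).re) :
    IsPosKernel fun a b : ball (0 : ℂ) 1 => (f a + conj (f b)) / (1 - a * conj (b : ℂ)) := by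
  have hdil : ∀ r ∈ Ioo (0 : ℝ) 1, MapsTo (fun z => (r : ℂ) * z) (closedBall 0 1) (ball 0 1) := by
    intro r hr z hz
    rw [mem_ball_zero_iff, norm_mul, Complex.norm_real, Real.norm_of_nonneg hr.1.le]
    nlinarith [mem_closedBall_zero_iff.mp hz, hr.1, hr.2, norm_nonneg z]
  refine IsPosKernel.of_tendsto (l := 𝓝[<] (1 : ℝ))
    (K := fun (r : ℝ) (a b : ball (0 : ℂ) 1) =>
      (f (r * a) + conj (f (r * b))) / (1 - a * conj (b : ℂ)))
    ?_ fun a b => ?_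
  · filter_upwards [Ioo_mem_nhdsLT zero_lt_one] with r hr
    refine isPosKernel_disk_of_diffContOnCl (f := fun z => f (r * z)) ?_
      fun z hz => hre _ (hdil r hr (sphere_subset_closedBall hz))
    refine DifferentiableOn.diffContOnCl ?_
    rw [closure_ball 0 one_ne_zero]
    exact hf.comp (differentiableOn_id.const_mul _) (hdil r hr)
  · have hscale : ∀ z : ball (0 : ℂ) 1,
        Tendsto (fun r : ℝ => f (r * z)) (𝓝[<] 1) (𝓝 (f z)) := by
      intro z
      have hcont : ContinuousAt f z := hf.continuousOn.continuousAt (isOpen_ball.mem_nhds z.2)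
      refine hcont.tendsto.comp (tendsto_nhdsWithin_of_tendsto_nhds ?_)
      simpa using ((Complex.continuous_ofReal.tendsto 1).mul_const (z : ℂ))
    exact (((hscale a).add ((Complex.continuous_conj.tendsto _).comp (hscale b))).div_const _)

def cayley (z : ℂ) : ℂ := (z - 1) / (z + 1)

theorem add_one_ne_zero_of_re_pos {z : ℂ} (hz : 0 < z.re) : z + 1 ≠ 0 := by
  intro h
  have := congrArg Complex.re h
  simp only [Complex.add_re, Complex.one_re, Complex.zero_re] at this
  linarith

theorem cayley_mem_ball {z : ℂ} (hz : 0 < z.re) : cayley z ∈ ball (0 : ℂ) 1 := by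
  have hlt : Complex.normSq (z - 1) < Complex.normSq (z + 1) := by
    simp only [Complex.normSq_apply, Complex.sub_re, Complex.sub_im, Complex.add_re,
      Complex.add_im, Complex.one_re, Complex.one_im]
    nlinarith
  rw [mem_ball_zero_iff, cayley, norm_div,
    div_lt_one (norm_pos_iff.mpr (add_one_ne_zero_of_re_pos hz))]
  simpa only [Complex.norm_def] using Real.sqrt_lt_sqrt (Complex.normSq_nonneg _) hlt

theorem re_one_add_div_one_sub_pos {u : ℂ} (hu : u ∈ ball (0 : ℂ) 1) :
    0 < ((1 + u) / (1 - u)).re := by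
  have hu1 : Complex.normSq u < 1 := by
    rw [Complex.normSq_eq_norm_sq]; nlinarith [mem_ball_zero_iff.mp hu, norm_nonneg u]
  rw [Complex.div_re, ← add_div]
  refine div_pos ?_ ?_
  · have : (1 + u).re * (1 - u).re + (1 + u).im * (1 - u).im = 1 - Complex.normSq u := by
      simp only [Complex.normSq_apply, Complex.add_re, Complex.add_im, Complex.sub_re,
        Complex.sub_im, Complex.one_re, Complex.one_im]
      ring
    linarith
  · refine Complex.normSq_pos.mpr (sub_ne_zero.mpr fun h => ?_)
    simp [← h] at hu

theorem one_add_cayley_div_one_sub_cayley {z : ℂ} (hz : z + 1 ≠ 0) :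
    (1 + cayley z) / (1 - cayley z) = z := by
  rw [cayley]
  field_simp
  ring

theorem one_sub_cayley_mul_conj_cayley {z w : ℂ} (hz : z + 1 ≠ 0) (hw : w + 1 ≠ 0) :
    1 - cayley z * conj (cayley w) = 2 * (z + conj w) / ((z + 1) * (conj w + 1)) := by
  have hw' : conj w + 1 ≠ 0 := by
    simpa using (map_ne_zero (starRingEnd ℂ)).mpr hw
  simp only [cayley, map_div₀, map_sub, map_add, map_one]
  field_simp
  ring

theorem isPosKernel_rightHalfPlane {ψ : ℂ → ℂ} (hol : DifferentiableOn ℂ ψ RHP)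
    (hre : ∀ z ∈ RHP, 0 ≤ (ψ z).re) :
    IsPosKernel fun z w : RHP => (ψ z + conj (ψ w)) / ((z : ℂ) + conj (w : ℂ)) := by
  have hmaps : MapsTo (fun u => (1 + u) / (1 - u)) (ball 0 1) RHP :=
    fun u hu => re_one_add_div_one_sub_pos hu
  have hf : DifferentiableOn ℂ (fun u => 2 * ψ ((1 + u) / (1 - u))) (ball 0 1) := by
    refine (hol.comp ?_ hmaps).const_mul 2
    refine (differentiableOn_const 1).add differentiableOn_id |>.div
      ((differentiableOn_const 1).sub differentiableOn_id) fun u hu => sub_ne_zero.mpr fun h => ?_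
    simp [← h] at hu
  have hfre : ∀ u ∈ ball (0 : ℂ) 1, 0 ≤ (2 * ψ ((1 + u) / (1 - u))).re := fun u hu => by
    simpa using hre _ (hmaps hu)
  -- The factor `2` in `f` cancels the `2` of `one_sub_cayley_mul_conj_cayley`.
  have hK := ((isPosKernel_disk hf hfre).comp fun z : RHP =>
    (⟨cayley z, cayley_mem_ball z.2⟩ : ball (0 : ℂ) 1)).mul_conj fun z : RHP => ((z : ℂ) + 1)⁻¹
  convert hK using 3 with z w
  have hz := add_one_ne_zero_of_re_pos z.2
  have hw := add_one_ne_zero_of_re_pos w.2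
  have hw' : conj (w : ℂ) + 1 ≠ 0 :=
    add_one_ne_zero_of_re_pos (by rw [Complex.conj_re]; exact w.2)
  simp only [one_add_cayley_div_one_sub_cayley hz, one_add_cayley_div_one_sub_cayley hw,
    one_sub_cayley_mul_conj_cayley hz hw, map_inv₀, map_add, map_one, map_mul, map_ofNat]
  field_simp

/-- Nevanlinna: a holomorphic `ψ` on `ℍ` has nonnegative real part iff
`(ψ(z) + conj ψ(w))/(z + conj w)` is a positive kernel on `ℍ`. -/
theorem nevanlinna_pos_kernel (ψ : ℂ → ℂ) (hol : DifferentiableOn ℂ ψ RHP) :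
    (∀ z ∈ RHP, 0 ≤ (ψ z).re) ↔
      IsPosKernel (fun z w : RHP =>
        (ψ z + (starRingEnd ℂ) (ψ w)) / ((z : ℂ) + (starRingEnd ℂ) (w : ℂ))) := by
  refine ⟨isPosKernel_rightHalfPlane hol, fun hK z hz => ?_⟩
  have hdiag := hK.diag_nonneg ⟨z, hz⟩
  simp only [Complex.add_conj, ← Complex.ofReal_div, Complex.zero_le_real] at hdiag
  have hz' : 0 < 2 * z.re := mul_pos two_pos hz
  linarith [(le_div_iff₀ hz').mp hdiag]
end
end

section
/- Let φ : ℍ → ℍ be holomorphic on the right half-plane. If sup_{z∈ℍ} Re z / Re φ(z) = λ < ∞, then the function z ↦ φ(z) − λ⁻¹ z has nonnegative real part on ℍ. -/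
open Complex MeasureTheory Filter Topology Set

noncomputable section

/-- If `sup_{z∈ℍ} Re z / Re φ(z) = λ < ∞`, then `φ(z) - λ⁻¹ z` has nonnegative
real part on `ℍ`. -/
theorem sub_inv_lambda_nonneg_re (φ : ℂ → ℂ) (hmaps : MapsTo φ RHP RHP)
    (hol : DifferentiableOn ℂ φ RHP) (lam : ℝ)
    (hlam : IsLUB {r : ℝ | ∃ z ∈ RHP, r = z.re / (φ z).re} lam) :
    ∀ z ∈ RHP, 0 ≤ (φ z - ((lam : ℂ))⁻¹ * z).re := by
  intro z hz
  have hzre : 0 < z.re := hz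
  have hφre : 0 < (φ z).re := hmaps hz
  have hub : z.re / (φ z).re ≤ lam := hlam.1 ⟨z, hz, rfl⟩
  have hlampos : 0 < lam := lt_of_lt_of_le (div_pos hzre hφre) hub
  have hkey : lam⁻¹ * z.re ≤ (φ z).re := by
    rw [div_le_iff₀ hφre] at hub
    rw [inv_mul_le_iff₀ hlampos]
    linarith [hub]
  have : ((lam : ℂ))⁻¹ * z = ((lam⁻¹ : ℝ) : ℂ) * z := by push_cast; ring
  rw [this]
  simp only [Complex.sub_re, Complex.re_ofReal_mul]
  linarith
end
end

section
/- Let φ : ℍ → ℍ be holomorphic. If limsup_{z→∞} Re z / Re φ(z) < ∞ (limit superior over z → ∞ in ℍ), then sup_{z∈ℍ} Re z / Re φ(z) < ∞, and the two quantities are equal. -/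
/-!
If `Re z < c Re φ(z)` near infinity, then `g = c φ - id` is holomorphic on the half-plane with
`Re g ≥ -Re z` everywhere and `Re g ≥ 0` near infinity. A Phragmén–Lindelöf argument (the minimum
principle for `Re g` on the truncated regions `{ε < Re z, |z| < R}`, then `ε → 0`) gives `Re g ≥ 0`,
i.e. `Re z / Re φ(z) ≤ c` on all of `ℍ`. Letting `c` decrease to the limit superior shows that it
bounds the ratio everywhere, and the reverse inequality is immediate.
-/

open Complex MeasureTheory Filter Topology Set

noncomputable section

lemma mem_RHP {z : ℂ} : z ∈ RHP ↔ 0 < z.re := Iff.rfl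

abbrev atInftyRHP : Filter ℂ := comap (fun z : ℂ => ‖z‖) atTop ⊓ 𝓟 RHP

instance neBot_atInftyRHP : atInftyRHP.NeBot := by
  refine (atTop_neBot.map ((↑) : ℝ → ℂ)).mono (tendsto_inf.mpr ⟨?_, ?_⟩)
  · exact tendsto_comap_iff.mpr (by simpa [Function.comp_def] using tendsto_abs_atTop_atTop)
  · exact tendsto_principal.mpr
      ((eventually_gt_atTop (0 : ℝ)).mono fun x hx => by simpa [mem_RHP] using hx)

lemma eventually_mem_RHP_atInftyRHP : ∀ᶠ z in atInftyRHP, z ∈ RHP :=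
  mem_inf_of_right (mem_principal_self RHP)

/-- Maximum modulus principle for `exp (-g)`. -/
lemma le_re_of_forall_mem_frontier {U : Set ℂ} (hU : Bornology.IsBounded U) {g : ℂ → ℂ}
    (hg : DifferentiableOn ℂ g (closure U)) {m : ℝ} (hm : ∀ z ∈ frontier U, m ≤ (g z).re)
    {z : ℂ} (hz : z ∈ closure U) : m ≤ (g z).re := by
  have hexp : ‖exp (-g z)‖ ≤ Real.exp (-m) :=
    Complex.norm_le_of_forall_mem_frontier_norm_le hU (hg.neg.cexp).diffContOnCl
      (fun w hw => by simpa [Complex.norm_exp] using hm w hw) hz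
  simpa [Complex.norm_exp] using hexp

lemma le_re_of_forall_re_eq_of_forall_norm_ge {g : ℂ → ℂ} (hg : DifferentiableOn ℂ g RHP)
    {ε R m : ℝ} (hε : 0 < ε) (hline : ∀ z : ℂ, z.re = ε → m ≤ (g z).re)
    (hfar : ∀ z ∈ RHP, R ≤ ‖z‖ → m ≤ (g z).re) {z : ℂ} (hz : ε < z.re) (hzR : ‖z‖ < R) :
    m ≤ (g z).re := by
  set U : Set ℂ := {z | ε < z.re ∧ ‖z‖ < R}
  have hUopen : IsOpen U :=
    (isOpen_lt continuous_const continuous_re).inter (isOpen_lt continuous_norm continuous_const)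
  have hclosure : closure U ⊆ {z | ε ≤ z.re ∧ ‖z‖ ≤ R} :=
    closure_minimal (fun z hz => ⟨hz.1.le, hz.2.le⟩)
      ((isClosed_le continuous_const continuous_re).inter
        (isClosed_le continuous_norm continuous_const))
  have hclosure_RHP : closure U ⊆ RHP := fun z hz => mem_RHP.mpr (hε.trans_le (hclosure hz).1)
  have hbounded : Bornology.IsBounded U :=
    (Metric.isBounded_closedBall (x := (0 : ℂ)) (r := R)).subset fun z hz => by simpa using hz.2.le
  refine le_re_of_forall_mem_frontier hbounded (hg.mono hclosure_RHP) (fun w hw => ?_)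
    (subset_closure ⟨hz, hzR⟩)
  have hwU : w ∉ U := by simpa [hUopen.interior_eq] using hw.2
  rcases not_and_or.mp hwU with hre | hnorm
  · exact hline w (le_antisymm (not_lt.mp hre) (hclosure hw.1).1)
  · exact hfar w (hclosure_RHP hw.1) (not_lt.mp hnorm)

/-- Phragmén–Lindelöf: the truncated regions `{ε < Re z, ‖z‖ < R}` exhaust the half-plane, and
on their vertical sides the lower bound `-a ε` tends to `0`. -/
theorem re_nonneg_of_neg_mul_re_le_re {g : ℂ → ℂ} (hg : DifferentiableOn ℂ g RHP) (a : ℝ)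
    (hlow : ∀ z ∈ RHP, -(a * z.re) ≤ (g z).re) (hfar : ∀ᶠ z in atInftyRHP, 0 ≤ (g z).re)
    {z₀ : ℂ} (hz₀ : z₀ ∈ RHP) : 0 ≤ (g z₀).re := by
  obtain ⟨R, hR⟩ : ∃ R, ∀ z ∈ RHP, R ≤ ‖z‖ → 0 ≤ (g z).re := by
    obtain ⟨R, hR⟩ := eventually_atTop.mp (eventually_comap.mp (eventually_inf_principal.mp hfar))
    exact ⟨R, fun z hz hzR => hR ‖z‖ hzR z rfl hz⟩
  have htruncated : ∀ ε, 0 < ε → ε < z₀.re → min (-(a * ε)) 0 ≤ (g z₀).re := fun ε hε hεz₀ =>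
    le_re_of_forall_re_eq_of_forall_norm_ge hg (R := max R (‖z₀‖ + 1)) hε
      (fun z hz => (min_le_left _ _).trans (hz ▸ hlow z (mem_RHP.mpr (hz ▸ hε))))
      (fun z hz hzR => (min_le_right _ _).trans (hR z hz ((le_max_left _ _).trans hzR)))
      hεz₀ ((lt_add_one _).trans_le (le_max_right _ _))
  have hlim : Tendsto (fun ε : ℝ => min (-(a * ε)) 0) (𝓝[>] 0) (𝓝 0) := by
    have : Continuous fun ε : ℝ => min (-(a * ε)) 0 := by fun_prop
    simpa using (this.tendsto 0).mono_left nhdsWithin_le_nhds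
  refine le_of_tendsto hlim ?_
  filter_upwards [self_mem_nhdsWithin, Ioo_mem_nhdsGT (show (0 : ℝ) < z₀.re from hz₀)]
    with ε hε hεz₀ using htruncated ε hε hεz₀.2

theorem re_le_mul_re_of_eventually {φ : ℂ → ℂ} (hmaps : MapsTo φ RHP RHP)
    (hol : DifferentiableOn ℂ φ RHP) {c : ℝ} (hc : 0 < c)
    (hfar : ∀ᶠ z in atInftyRHP, z.re ≤ c * (φ z).re) {z : ℂ} (hz : z ∈ RHP) :
    z.re ≤ c * (φ z).re := by
  have hg : DifferentiableOn ℂ (fun z => (c : ℂ) * φ z - z) RHP :=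
    (hol.const_mul _).sub differentiableOn_id
  have hre : ∀ z, ((c : ℂ) * φ z - z).re = c * (φ z).re - z.re := by simp
  have hlow : ∀ z ∈ RHP, -(1 * z.re) ≤ ((c : ℂ) * φ z - z).re := fun z hz => by
    have : 0 < c * (φ z).re := mul_pos hc (hmaps hz)
    rw [hre]; linarith
  have := re_nonneg_of_neg_mul_re_le_re hg 1 hlow
    (hfar.mono fun z hz => by rw [hre]; linarith) hz
  rw [hre] at this; linarith

theorem re_div_re_le_limsup {φ : ℂ → ℂ} (hmaps : MapsTo φ RHP RHP)
    (hol : DifferentiableOn ℂ φ RHP)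
    (hbdd : IsBoundedUnder (· ≤ ·) atInftyRHP fun z : ℂ => z.re / (φ z).re)
    {z : ℂ} (hz : z ∈ RHP) :
    z.re / (φ z).re ≤ limsup (fun z : ℂ => z.re / (φ z).re) atInftyRHP := by
  refine le_of_forall_gt_imp_ge_of_dense fun c hc => ?_
  have hlt := eventually_lt_of_limsup_lt hc hbdd
  obtain ⟨w, hwc, hw⟩ := (hlt.and eventually_mem_RHP_atInftyRHP).exists
  have hc0 : 0 < c := (div_pos (mem_RHP.mp hw) (hmaps hw)).trans hwc
  refine (div_le_iff₀ (hmaps hz)).mpr (re_le_mul_re_of_eventually hmaps hol hc0 ?_ hz)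
  filter_upwards [hlt, eventually_mem_RHP_atInftyRHP] with w hwc hw
  exact ((div_lt_iff₀ (hmaps hw)).mp hwc).le

/-- Half-plane Julia–Carathéodory, (3) ⟹ (2): if `limsup_{z→∞} Re z / Re φ(z)`
is finite, then `sup_{z∈ℍ} Re z / Re φ(z)` is finite and the two are equal. -/
theorem sup_eq_limsup (φ : ℂ → ℂ) (hmaps : MapsTo φ RHP RHP)
    (hol : DifferentiableOn ℂ φ RHP)
    (hbdd : IsBoundedUnder (· ≤ ·) (Filter.comap (fun z : ℂ => ‖z‖) Filter.atTop ⊓ Filter.principal RHP)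
      (fun z : ℂ => z.re / (φ z).re)) :
    BddAbove {r : ℝ | ∃ z ∈ RHP, r = z.re / (φ z).re} ∧
      sSup {r : ℝ | ∃ z ∈ RHP, r = z.re / (φ z).re} =
        Filter.limsup (fun z : ℂ => z.re / (φ z).re)
          (Filter.comap (fun z : ℂ => ‖z‖) Filter.atTop ⊓ Filter.principal RHP) := by
  have hle : ∀ z ∈ RHP, z.re / (φ z).re ≤ limsup (fun z : ℂ => z.re / (φ z).re) atInftyRHP :=
    fun z hz => re_div_re_le_limsup hmaps hol hbdd hz
  have hbddS : BddAbove {r : ℝ | ∃ z ∈ RHP, r = z.re / (φ z).re} :=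
    ⟨_, by rintro r ⟨z, hz, rfl⟩; exact hle z hz⟩
  have hcobdd : IsCoboundedUnder (· ≤ ·) atInftyRHP fun z : ℂ => z.re / (φ z).re :=
    IsBoundedUnder.isCoboundedUnder_flip (r := (· ≥ ·))
      ⟨0, eventually_map.mpr <| eventually_mem_RHP_atInftyRHP.mono fun z hz =>
        (div_pos (mem_RHP.mp hz) (hmaps hz)).le⟩
  refine ⟨hbddS, le_antisymm (csSup_le ⟨_, 1, by simp [mem_RHP], rfl⟩ ?_) ?_⟩
  · rintro r ⟨z, hz, rfl⟩
    exact hle z hz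
  · exact limsup_le_of_le hcobdd
      (eventually_mem_RHP_atInftyRHP.mono fun z hz => le_csSup hbddS ⟨z, hz, rfl⟩)
end
end

section
/- Affine maps φ(z) = az + b with a > 0 and Re b ≥ 0 induce bounded composition operators on H²(ℍ) with ‖C_φ‖ = 1/√a; in particular sup_{z∈ℍ} Re z / Re(az+b) = 1/a. -/
open Complex MeasureTheory Filter Topology Set

noncomputable section

/-!
Since `φ` maps the line `Re = x` affinely onto the line `Re = ax + Re b`, stretching it by `a`,
the line means satisfy `M(f ∘ φ, x) = a⁻¹ M(f, ax + Re b)`, whence `‖C_φ‖² ≤ 1/a`.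
Conversely, for the kernels `k_R(z) = 1/(z + R)` with `R > 0` real,
`‖C_φ k_R‖² / ‖k_R‖² = R / (a(R + Re b))`, which tends to `1/a` as `R → ∞`.
-/

theorem integral_comp_mul_add_of_pos (g : ℝ → ℝ) {a : ℝ} (ha : 0 < a) (c : ℝ) :
    ∫ y : ℝ, g (a * y + c) = a⁻¹ * ∫ y : ℝ, g y := by
  rw [Measure.integral_comp_mul_left (fun t => g (t + c)) a, integral_add_right_eq_self g c,
    abs_of_pos (inv_pos.2 ha), smul_eq_mul]

theorem integral_univ_inv_sq_add_sq {c : ℝ} (hc : 0 < c) :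
    ∫ y : ℝ, (c ^ 2 + y ^ 2)⁻¹ = Real.pi / c := by
  have h : (fun y : ℝ => (c ^ 2 + y ^ 2)⁻¹) = fun y => (c ^ 2)⁻¹ * (1 + (c⁻¹ * y) ^ 2)⁻¹ := by
    funext y
    field_simp
  rw [h, integral_const_mul, Measure.integral_comp_inv_mul_left (fun u : ℝ => (1 + u ^ 2)⁻¹) c,
    integral_univ_inv_one_add_sq, abs_of_pos hc, smul_eq_mul]
  field_simp

theorem tendsto_div_mul_add_atTop {a : ℝ} (ha : a ≠ 0) (c : ℝ) :
    Tendsto (fun x : ℝ => x / (a * x + c)) atTop (𝓝 a⁻¹) := by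
  have hlim : Tendsto (fun x : ℝ => (a + c / x)⁻¹) atTop (𝓝 a⁻¹) := by
    have hcx : Tendsto (fun x : ℝ => c / x) atTop (𝓝 0) := tendsto_const_nhds.div_atTop tendsto_id
    simpa using (hcx.const_add a).inv₀ (by rwa [add_zero])
  refine hlim.congr' ?_
  filter_upwards [eventually_gt_atTop 0] with x hx
  field_simp

theorem mapsTo_affine_RHP {a : ℝ} (ha : 0 < a) {b : ℂ} (hb : 0 ≤ b.re) :
    MapsTo (fun z : ℂ => (a : ℂ) * z + b) RHP RHP := by
  intro z (hz : 0 < z.re)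
  show 0 < ((a : ℂ) * z + b).re
  simp only [add_re, re_ofReal_mul]
  positivity

theorem isLUB_re_div_re_affine {a : ℝ} (ha : 0 < a) {b : ℂ} (hb : 0 ≤ b.re) :
    IsLUB {r : ℝ | ∃ z ∈ RHP, r = z.re / ((a : ℂ) * z + b).re} (1 / a) := by
  refine isLUB_of_mem_closure ?_ (mem_closure_of_tendsto
    (one_div a ▸ tendsto_div_mul_add_atTop ha.ne' b.re) ?_)
  · rintro _ ⟨z, hz : 0 < z.re, rfl⟩
    simp only [add_re, re_ofReal_mul]
    rw [div_le_div_iff₀ (by positivity) ha]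
    nlinarith
  · filter_upwards [eventually_gt_atTop 0] with x (hx : 0 < x)
    exact ⟨x, by simpa [RHP] using hx, by simp⟩

theorem hardyMean2_comp_affine (f : ℂ → ℂ) {a : ℝ} (ha : 0 < a) (b : ℂ) (x : ℝ) :
    hardyMean2 (f ∘ fun z : ℂ => (a : ℂ) * z + b) x = a⁻¹ * hardyMean2 f (a * x + b.re) := by
  have hline : ∀ y : ℝ, (a : ℂ) * (x + y * I) + b
      = ((a * x + b.re : ℝ) : ℂ) + ((a * y + b.im : ℝ) : ℂ) * I := by
    intro y
    apply Complex.ext <;> simp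
  simp only [hardyMean2, Function.comp_apply, hline]
  rw [integral_comp_mul_add_of_pos (fun t : ℝ => ‖f ((a * x + b.re : ℝ) + (t : ℂ) * I)‖ ^ 2) ha]
  ring

theorem MemHardy2.bddAbove {f : ℂ → ℂ} (hf : MemHardy2 f) :
    BddAbove {m : ℝ | ∃ x : ℝ, 0 < x ∧ m = hardyMean2 f x} := by
  obtain ⟨-, C, hC⟩ := hf
  exact ⟨C, by rintro _ ⟨x, hx, rfl⟩; exact hC x hx⟩

theorem MemHardy2.hardyMean2_le_hardyNormSq {f : ℂ → ℂ} (hf : MemHardy2 f) {x : ℝ} (hx : 0 < x) :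
    hardyMean2 f x ≤ hardyNormSq f :=
  le_csSup hf.bddAbove ⟨x, hx, rfl⟩

theorem hardyNormSq_le {f : ℂ → ℂ} {C : ℝ} (h : ∀ x : ℝ, 0 < x → hardyMean2 f x ≤ C) :
    hardyNormSq f ≤ C :=
  csSup_le ⟨_, 1, one_pos, rfl⟩ (by rintro _ ⟨x, hx, rfl⟩; exact h x hx)

theorem hardyNormSq_eq_of_eqOn {f : ℂ → ℂ} {g : ℝ → ℝ} (hfg : EqOn (hardyMean2 f) g (Ioi 0))
    (hg : ∀ x : ℝ, 0 < x → g x ≤ g 0) (hcont : ContinuousAt g 0) : hardyNormSq f = g 0 := by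
  refine IsLUB.csSup_eq ?_ ⟨_, 1, one_pos, rfl⟩
  refine isLUB_of_mem_closure ?_ (mem_closure_of_tendsto (hcont.continuousWithinAt (s := Ioi 0)) ?_)
  · rintro _ ⟨x, hx, rfl⟩
    exact hfg hx ▸ hg x hx
  · filter_upwards [self_mem_nhdsWithin] with x hx
    exact ⟨x, hx, (hfg hx).symm⟩

section Affine

variable {a : ℝ} {b : ℂ} {f : ℂ → ℂ}

theorem MemHardy2.comp_affine (hf : MemHardy2 f) (ha : 0 < a) (hb : 0 ≤ b.re) :
    MemHardy2 (f ∘ fun z : ℂ => (a : ℂ) * z + b) := by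
  obtain ⟨hdiff, C, hC⟩ := hf
  refine ⟨hdiff.comp (by fun_prop) (mapsTo_affine_RHP ha hb), a⁻¹ * C, fun x hx => ?_⟩
  rw [hardyMean2_comp_affine f ha]
  gcongr
  exact hC _ (by positivity)

theorem MemHardy2.hardyNormSq_comp_affine_le (hf : MemHardy2 f) (ha : 0 < a) (hb : 0 ≤ b.re) :
    hardyNormSq (f ∘ fun z : ℂ => (a : ℂ) * z + b) ≤ a⁻¹ * hardyNormSq f :=
  hardyNormSq_le fun x hx => by
    rw [hardyMean2_comp_affine f ha]
    gcongr
    exact hf.hardyMean2_le_hardyNormSq (by positivity)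

theorem compBoundedBy_affine (ha : 0 < a) (hb : 0 ≤ b.re) :
    CompBoundedBy (fun z : ℂ => (a : ℂ) * z + b) (1 / √a) := by
  intro f hf
  rw [div_pow, one_pow, Real.sq_sqrt ha.le, one_div]
  exact ⟨hf.comp_affine ha hb, hf.hardyNormSq_comp_affine_le ha hb⟩

end Affine

section Kernel

variable {R : ℝ}

theorem hardyMean2_kern_ofReal {x : ℝ} (h : 0 < x + R) :
    hardyMean2 (kern R) x = (2 * (x + R))⁻¹ := by
  have hnorm : ∀ y : ℝ, ‖kern R (x + y * I)‖ ^ 2 = ((x + R) ^ 2 + y ^ 2)⁻¹ := by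
    intro y
    rw [kern, conj_ofReal, one_div, norm_inv, inv_pow, Complex.sq_norm, normSq_apply]
    simp only [add_re, ofReal_re, mul_re, I_re, mul_zero, ofReal_im, I_im, mul_one, sub_self,
      add_zero, add_im, mul_im, zero_add]
    ring
  simp only [hardyMean2, hnorm, integral_univ_inv_sq_add_sq h]
  field_simp

theorem memHardy2_kern_ofReal (hR : 0 < R) : MemHardy2 (kern R) := by
  refine ⟨?_, (2 * R)⁻¹, fun x hx => ?_⟩
  · intro z (hz : 0 < z.re)
    refine (DifferentiableAt.div (by fun_prop) (by fun_prop) ?_).differentiableWithinAt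
    intro h
    have : z.re + R = 0 := by simpa using congrArg re h
    linarith
  · rw [hardyMean2_kern_ofReal (by positivity)]
    gcongr
    linarith

theorem hardyNormSq_kern_ofReal (hR : 0 < R) : hardyNormSq (kern R) = (2 * R)⁻¹ := by
  simpa using hardyNormSq_eq_of_eqOn (g := fun x => (2 * (x + R))⁻¹)
    (fun x (hx : 0 < x) => hardyMean2_kern_ofReal (by positivity))
    (fun x hx => by gcongr) (by fun_prop (disch := positivity))

theorem hardyNormSq_kern_ofReal_comp_affine {a : ℝ} (ha : 0 < a) {b : ℂ} (hb : 0 ≤ b.re)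
    (hR : 0 < R) :
    hardyNormSq (kern R ∘ fun z : ℂ => (a : ℂ) * z + b) = a⁻¹ * (2 * (b.re + R))⁻¹ := by
  simpa using hardyNormSq_eq_of_eqOn (g := fun x => a⁻¹ * (2 * (a * x + b.re + R))⁻¹)
    (fun x (hx : 0 < x) => by
      rw [hardyMean2_comp_affine _ ha, hardyMean2_kern_ofReal (by positivity)])
    (fun x hx => by gcongr) (by fun_prop (disch := positivity))

end Kernel

theorem inv_le_sq_of_compBoundedBy_affine {a : ℝ} (ha : 0 < a) {b : ℂ} (hb : 0 ≤ b.re) {M : ℝ}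
    (hM : CompBoundedBy (fun z : ℂ => (a : ℂ) * z + b) M) : a⁻¹ ≤ M ^ 2 := by
  have hratio : ∀ R : ℝ, 0 < R → R / (a * R + a * b.re) ≤ M ^ 2 := by
    intro R hR
    have h := (hM _ (memHardy2_kern_ofReal hR)).2
    rw [hardyNormSq_kern_ofReal_comp_affine ha hb hR, hardyNormSq_kern_ofReal hR] at h
    field_simp at h
    rw [div_le_iff₀ (by positivity)]
    linarith
  exact le_of_tendsto (tendsto_div_mul_add_atTop ha.ne' _) ((eventually_gt_atTop 0).mono hratio)

/-- Affine maps `φ(z) = az + b`, `a > 0`, `Re b ≥ 0`, send `ℍ` into `ℍ`, have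
`sup_{z∈ℍ} Re z / Re(az+b) = 1/a`, and induce bounded composition operators on
`H²(ℍ)` with `‖C_φ‖ = 1/√a`. -/
theorem affine_comp_norm (a : ℝ) (ha : 0 < a) (b : ℂ) (hb : 0 ≤ b.re) :
    MapsTo (fun z : ℂ => (a : ℂ) * z + b) RHP RHP ∧
      IsLUB {r : ℝ | ∃ z ∈ RHP, r = z.re / ((a : ℂ) * z + b).re} (1 / a) ∧
      CompBoundedBy (fun z : ℂ => (a : ℂ) * z + b) (1 / Real.sqrt a) ∧
      compNorm (fun z : ℂ => (a : ℂ) * z + b) = 1 / Real.sqrt a := by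
  have hbounded := compBoundedBy_affine ha hb
  refine ⟨mapsTo_affine_RHP ha hb, isLUB_re_div_re_affine ha hb, hbounded, ?_⟩
  refine IsLeast.csInf_eq ⟨⟨by positivity, hbounded⟩, ?_⟩
  rintro M ⟨hM0, hM⟩
  rw [one_div, ← Real.sqrt_inv, Real.sqrt_le_left hM0]
  exact inv_le_sq_of_compBoundedBy_affine ha hb hM
end
end
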